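/- For admissible S, the polynomial p_B(S,·) with #P_B(S,n) = p_B(S,n)·2^{2n-#S-1} (for signed permutations) equals the polynomial p(S,·) with #P(S,n) = p(S,n)·2^{n-#S-1} (for ordinary permutations). -/

import Mathlib

open Finset

/-- Value at (1-indexed) position `i` of the signed permutation represented by a pair
`(σ, ε)`: the value is `±(σ(i)+1)`, negative iff `ε i = true`. Returns 0 out of range. -/
def bval (n : ℕ) (π : Equiv.Perm (Fin n) × (Fin n → Bool)) (i : ℕ) : ℤ :=
  if h : i - 1 < n then
    (if π.2 ⟨i - 1, h⟩ then (-1 : ℤ) else 1) * (((π.1 ⟨i - 1, h⟩ : ℕ) : ℤ) + 1)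
  else 0

/-- Peak set of a signed permutation: positions `i ∈ {2,…,n-1}` with `π_{i-1} < π_i > π_{i+1}`. -/
def bPeakSet (n : ℕ) (π : Equiv.Perm (Fin n) × (Fin n → Bool)) : Finset ℕ :=
  (Finset.Icc 2 (n - 1)).filter fun i =>
    bval n π (i - 1) < bval n π i ∧ bval n π (i + 1) < bval n π i

/-- `#P_B(S,n)`: number of signed permutations in `B_n` with peak set exactly `S`. -/
def PB (n : ℕ) (S : Finset ℕ) : ℕ :=
  (Finset.univ.filter fun π : Equiv.Perm (Fin n) × (Fin n → Bool) => bPeakSet n π = S).card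

/-- Value with the convention `π_0 = 0`. -/
def bvalHat (n : ℕ) (π : Equiv.Perm (Fin n) × (Fin n → Bool)) (i : ℕ) : ℤ :=
  if i = 0 then 0 else bval n π i

/-- Peak set with `π_0 = 0`: positions `i ∈ {1,…,n-1}` with `π_{i-1} < π_i > π_{i+1}`. -/
def bPeakSetHat (n : ℕ) (π : Equiv.Perm (Fin n) × (Fin n → Bool)) : Finset ℕ :=
  (Finset.Icc 1 (n - 1)).filter fun i =>
    bvalHat n π (i - 1) < bvalHat n π i ∧ bvalHat n π (i + 1) < bvalHat n π i

/-- `#P̂_B(S,n)`: signed permutations with `π_0 = 0` prepended and peak set exactly `S`. -/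
def PBhat (n : ℕ) (S : Finset ℕ) : ℕ :=
  (Finset.univ.filter fun π : Equiv.Perm (Fin n) × (Fin n → Bool) => bPeakSetHat n π = S).card

/-- Value at (1-indexed) position `i` of an ordinary permutation of `{1,…,n}`. -/
def sval (n : ℕ) (π : Equiv.Perm (Fin n)) (i : ℕ) : ℤ :=
  if h : i - 1 < n then ((π ⟨i - 1, h⟩ : ℕ) : ℤ) + 1 else 0

/-- Peak set of an ordinary permutation: positions `i ∈ {2,…,n-1}`. -/
def sPeakSet (n : ℕ) (π : Equiv.Perm (Fin n)) : Finset ℕ :=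
  (Finset.Icc 2 (n - 1)).filter fun i =>
    sval n π (i - 1) < sval n π i ∧ sval n π (i + 1) < sval n π i

/-- `#P(S,n)`: number of permutations of `{1,…,n}` with peak set exactly `S`. -/
def PP (n : ℕ) (S : Finset ℕ) : ℕ :=
  (Finset.univ.filter fun π : Equiv.Perm (Fin n) => sPeakSet n π = S).card

def svalHat (n : ℕ) (π : Equiv.Perm (Fin n)) (i : ℕ) : ℤ :=
  if i = 0 then 0 else sval n π i

/-- Peak set with the convention `π_0 = 0`: positions `i ∈ {1,…,n-1}`. -/
def sPeakSetHat (n : ℕ) (π : Equiv.Perm (Fin n)) : Finset ℕ :=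
  (Finset.Icc 1 (n - 1)).filter fun i =>
    svalHat n π (i - 1) < svalHat n π i ∧ svalHat n π (i + 1) < svalHat n π i

/-- `#P̂(S,n)`: permutations of `{1,…,n}` with `π_0 = 0` prepended and peak set exactly `S`. -/
def PPhat (n : ℕ) (S : Finset ℕ) : ℕ :=
  (Finset.univ.filter fun π : Equiv.Perm (Fin n) => sPeakSetHat n π = S).card

/-! Write a signed permutation as `(σ, δ ∘ σ)`, with `δ` assigning a sign to each absolute
value. For fixed `δ` the signed values `±(w + 1)` are order-isomorphic to `ρ_δ w` for some
`ρ_δ ∈ S_n`, so the peak set of `(σ, δ ∘ σ)` is that of the ordinary permutation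
`ρ_δ ∘ σ`. As `σ ↦ ρ_δ ∘ σ` is a bijection of `S_n`, summing over the `2^n` choices of `δ`
gives `#P_B(S,n) = 2^n · #P(S,n)`, and the two polynomial formulas then agree at every
large `n`. -/

theorem Tuple.exists_perm_lt_iff_of_injective {α : Type*} [LinearOrder α] {n : ℕ}
    {f : Fin n → α} (hf : Function.Injective f) :
    ∃ ρ : Equiv.Perm (Fin n), ∀ a b, ρ a < ρ b ↔ f a < f b := by
  have hmono : StrictMono (f ∘ Tuple.sort f) :=
    (Tuple.monotone_sort f).strictMono_of_injective (hf.comp (Equiv.injective _))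
  refine ⟨(Tuple.sort f).symm, fun a b => ?_⟩
  rw [← hmono.lt_iff_lt]
  simp

def signedVal {n : ℕ} (δ : Fin n → Bool) (w : Fin n) : ℤ :=
  (if δ w then (-1 : ℤ) else 1) * ((w : ℕ) + 1)

theorem abs_signedVal {n : ℕ} (δ : Fin n → Bool) (w : Fin n) :
    |signedVal δ w| = (w : ℕ) + 1 := by
  rw [signedVal, abs_mul, abs_of_nonneg (by positivity : (0 : ℤ) ≤ (w : ℕ) + 1)]
  split_ifs <;> simp

theorem signedVal_injective {n : ℕ} (δ : Fin n → Bool) :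
    Function.Injective (signedVal δ) := by
  intro a b h
  have := congrArg abs h
  rw [abs_signedVal, abs_signedVal] at this
  exact Fin.ext (by omega)

theorem bval_of_lt {n : ℕ} (σ : Equiv.Perm (Fin n)) (δ : Fin n → Bool) {i : ℕ}
    (h : i - 1 < n) :
    bval n (σ, δ ∘ σ) i = signedVal δ (σ ⟨i - 1, h⟩) := by
  simp [bval, signedVal, h]

theorem sval_of_lt {n : ℕ} (τ : Equiv.Perm (Fin n)) {i : ℕ} (h : i - 1 < n) :
    sval n τ i = (τ ⟨i - 1, h⟩ : ℕ) + 1 := by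
  simp [sval, h]

theorem sval_trans_lt_iff_bval_lt {n : ℕ} (σ : Equiv.Perm (Fin n)) (δ : Fin n → Bool)
    {ρ : Equiv.Perm (Fin n)} (hρ : ∀ a b, ρ a < ρ b ↔ signedVal δ a < signedVal δ b)
    {i j : ℕ} (hi : i - 1 < n) (hj : j - 1 < n) :
    sval n (σ.trans ρ) i < sval n (σ.trans ρ) j ↔
      bval n (σ, δ ∘ σ) i < bval n (σ, δ ∘ σ) j := by
  rw [sval_of_lt _ hi, sval_of_lt _ hj, bval_of_lt σ δ hi, bval_of_lt σ δ hj, ← hρ]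
  simp

theorem sPeakSet_trans_eq_bPeakSet {n : ℕ} (σ : Equiv.Perm (Fin n)) (δ : Fin n → Bool)
    {ρ : Equiv.Perm (Fin n)} (hρ : ∀ a b, ρ a < ρ b ↔ signedVal δ a < signedVal δ b) :
    sPeakSet n (σ.trans ρ) = bPeakSet n (σ, δ ∘ σ) := by
  refine Finset.filter_congr fun i hi => ?_
  have hi := Finset.mem_Icc.1 hi
  rw [sval_trans_lt_iff_bval_lt σ δ hρ (by omega) (by omega),
    sval_trans_lt_iff_bval_lt σ δ hρ (by omega) (by omega)]

theorem PB_eq_two_pow_mul_PP (n : ℕ) (S : Finset ℕ) : PB n S = 2 ^ n * PP n S := by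
  choose ρ hρ using fun δ : Fin n → Bool =>
    Tuple.exists_perm_lt_iff_of_injective (signedVal_injective δ)
  have hfiber : ∀ δ : Fin n → Bool,
      ∑ σ : Equiv.Perm (Fin n), (if bPeakSet n (σ, δ ∘ σ) = S then 1 else 0) = PP n S := by
    intro δ
    rw [PP, Finset.card_filter]
    exact Fintype.sum_equiv (Equiv.mulLeft (ρ δ)) _ _ fun σ => by
      rw [← sPeakSet_trans_eq_bPeakSet σ δ (hρ δ)]; rfl
  calc PB n S
      = ∑ σ : Equiv.Perm (Fin n), ∑ δ : Fin n → Bool,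
          (if bPeakSet n (σ, δ ∘ σ) = S then 1 else 0) := by
        rw [PB, Finset.card_filter, Fintype.sum_prod_type]
        refine Fintype.sum_congr _ _ fun σ => ?_
        exact (Fintype.sum_equiv (Equiv.arrowCongr σ.symm (Equiv.refl Bool)) _ _ fun _ => rfl).symm
    _ = 2 ^ n * PP n S := by
        rw [Finset.sum_comm]
        simp [hfiber]

theorem Finset.subset_Icc_of_forall_le_of_sup_le {S : Finset ℕ} {a b : ℕ}
    (ha : ∀ i ∈ S, a ≤ i) (hb : S.sup id ≤ b) : S ⊆ Finset.Icc a b := fun i hi =>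
  Finset.mem_Icc.2 ⟨ha i hi, (Finset.le_sup (f := id) hi).trans hb⟩

theorem stmt5_general (S : Finset ℕ) (h2 : ∀ i ∈ S, 2 ≤ i)
    (p pb : Polynomial ℚ)
    (hp : ∀ n : ℕ, 1 ≤ n → S ⊆ Finset.Icc 2 (n - 1) →
      (PP n S : ℚ) = p.eval (n : ℚ) * 2 ^ (n - S.card - 1))
    (hpb : ∀ n : ℕ, 1 ≤ n → S ⊆ Finset.Icc 2 (n - 1) →
      (PB n S : ℚ) = pb.eval (n : ℚ) * 2 ^ (2 * n - S.card - 1)) :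
    p = pb := by
  have heval : ∀ n ≥ S.sup id + 1, p.eval (n : ℚ) = pb.eval (n : ℚ) := by
    intro n hn
    have hS := Finset.subset_Icc_of_forall_le_of_sup_le h2 (by omega : S.sup id ≤ n - 1)
    have hcard : S.card + 1 ≤ n := by
      have := Finset.card_le_card hS
      simp only [Nat.card_Icc] at this
      omega
    have hcount := hpb n (by omega) hS
    rw [PB_eq_two_pow_mul_PP, Nat.cast_mul, hp n (by omega) hS,
      show 2 * n - S.card - 1 = n + (n - S.card - 1) by omega, pow_add] at hcount
    push_cast at hcount
    refine mul_right_cancel₀ (by positivity : (2 : ℚ) ^ n * 2 ^ (n - S.card - 1) ≠ 0) ?_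
    linear_combination hcount
  refine Polynomial.eq_of_infinite_eval_eq p pb
    (((Set.Ici_infinite (S.sup id + 1)).image Nat.cast_injective.injOn).mono ?_)
  rintro _ ⟨n, hn, rfl⟩
  exact heval n hn

/-- the polynomial for `B_n` equals the polynomial for `S_n`. -/
theorem stmt5 (S : Finset ℕ) (hcons : ∀ i ∈ S, i + 1 ∉ S) (h2 : ∀ i ∈ S, 2 ≤ i)
    (p pb : Polynomial ℚ)
    (hp : ∀ n : ℕ, 1 ≤ n → S ⊆ Finset.Icc 2 (n - 1) →
      (PP n S : ℚ) = p.eval (n : ℚ) * 2 ^ (n - S.card - 1))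
    (hpb : ∀ n : ℕ, 1 ≤ n → S ⊆ Finset.Icc 2 (n - 1) →
      (PB n S : ℚ) = pb.eval (n : ℚ) * 2 ^ (2 * n - S.card - 1)) :
    p = pb :=
  stmt5_general S h2 p pb hp hpb
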